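/- Let ρ ∈ Matrix (Fin d) (Fin d) ℂ be positive definite with trace 1, and let A be a measurement with n outcomes on ℂ^d all of whose effects are nonzero. Then the trace of F_ρ(A), which equals the real number ∑ x, tr(ρ * A x * A x) / tr(ρ * A x), is at least 1; moreover it equals 1 if and only if A is trivial, i.e., for every x there exists a real a_x > 0 with A x = (a_x : ℂ) • 1. -/

import Mathlib

open Matrix
open scoped Kronecker ComplexOrder

noncomputable section

/-- A measurement (POVM): a finite family of positive semidefinite matrices summing to `1`. -/
def IsMeasurement {ι κ : Type*} [Fintype ι] [DecidableEq ι] [Fintype κ]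
    (A : κ → Matrix ι ι ℂ) : Prop :=
  (∀ x, (A x).PosSemidef) ∧ ∑ x, A x = 1

/-- `A` is a post-processing of `B`: `A ⪯ B`. -/
def PostProc {ι : Type*} {n m : ℕ}
    (A : Fin n → Matrix ι ι ℂ) (B : Fin m → Matrix ι ι ℂ) : Prop :=
  ∃ μ : Fin n → Fin m → ℝ,
    (∀ x y, 0 ≤ μ x y) ∧ (∀ y, ∑ x, μ x y = 1) ∧
    (∀ x, A x = ∑ y, (μ x y : ℂ) • B y)

/-- The outer product `|E⟩⟨F|` of the vectorizations of two matrices. -/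
def outerProd {ι : Type*} (E F : Matrix ι ι ℂ) : Matrix (ι × ι) (ι × ι) ℂ :=
  Matrix.of fun p q => E p.1 p.2 * star (F q.1 q.2)

/-- The (un-normalized) Fisher information map of a measurement. -/
noncomputable def Fisher {ι κ : Type*} [Fintype ι] [Fintype κ]
    (A : κ → Matrix ι ι ℂ) : Matrix (ι × ι) (ι × ι) ℂ :=
  ∑ x, (Matrix.trace (A x))⁻¹ • outerProd (A x) (A x)

/-- The positive semidefinite square root of a positive semidefinite matrix, as defined in
Mathlib of December 2024 (since removed from Mathlib). -/
noncomputable def Matrix.PosSemidef.sqrt {n 𝕜 : Type*} [Fintype n] [DecidableEq n] [RCLike 𝕜]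
    {A : Matrix n n 𝕜} (hA : A.PosSemidef) : Matrix n n 𝕜 :=
  hA.isHermitian.eigenvectorUnitary.1 * diagonal ((↑) ∘ (√·) ∘ hA.isHermitian.eigenvalues) *
  (star hA.isHermitian.eigenvectorUnitary : Matrix n n 𝕜)

/-- The generalized Fisher information map of a measurement, relative to a
positive definite state `ρ` (with positive semidefinite square root `ρ^{1/2}`). -/
noncomputable def FisherRho {ι κ : Type*} [Fintype ι] [DecidableEq ι] [Fintype κ]
    {ρ : Matrix ι ι ℂ} (hρ : ρ.PosDef) (A : κ → Matrix ι ι ℂ) :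
    Matrix (ι × ι) (ι × ι) ℂ :=
  ∑ x, (Matrix.trace (ρ * A x))⁻¹ •
    outerProd (hρ.posSemidef.sqrt * A x) (hρ.posSemidef.sqrt * A x)

/-- The height of a finite family of self-adjoint matrices: the infimum of the traces of
Hermitian matrices dominating every member in the Loewner order. -/
noncomputable def height {ι κ : Type*} [Fintype ι] [Fintype κ]
    (X : κ → Matrix ι ι ℂ) : ℝ :=
  sInf { t : ℝ | ∃ H : Matrix ι ι ℂ, H.IsHermitian ∧
    (∀ i, (H - X i).PosSemidef) ∧ t = (Matrix.trace H).re }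

/-!
Write `γₓ = tr(ρ Aₓ)`. Positive definiteness of `ρ` gives `γₓ > 0` for every nonzero effect, and
`∑ γₓ = tr ρ = 1`. As `tr ρ = 1`, `tr(ρ Aₓ²) = Var_ρ(Aₓ) + γₓ²` with the variance
`Var_ρ(Aₓ) = tr(ρ (Aₓ - γₓ)²) ≥ 0`, so `T = ∑ tr(ρ Aₓ²) / γₓ = 1 + ∑ Var_ρ(Aₓ) / γₓ ≥ 1`.
Equality forces every variance to vanish, i.e. `Aₓ = γₓ • 1`.
-/

open Finset

namespace Matrix

lemma IsHermitian.isSelfAdjoint_trace_mul {ι R : Type*} [Fintype ι] [CommRing R] [StarRing R]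
    {ρ A : Matrix ι ι R} (hρ : ρ.IsHermitian) (hA : A.IsHermitian) :
    IsSelfAdjoint (ρ * A).trace := by
  rw [IsSelfAdjoint, ← trace_conjTranspose, conjTranspose_mul, hA.eq, hρ.eq, trace_mul_comm]

lemma IsHermitian.posSemidef_mul_self {ι R : Type*} [Fintype ι] [Ring R] [PartialOrder R]
    [StarRing R] [StarOrderedRing R] {M : Matrix ι ι R} (hM : M.IsHermitian) :
    (M * M).PosSemidef := by
  simpa only [hM.eq] using posSemidef_conjTranspose_mul_self M

section RCLike

variable {ι 𝕜 : Type*} [Fintype ι] [DecidableEq ι] [RCLike 𝕜]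

lemma PosSemidef.isHermitian_sqrt {A : Matrix ι ι 𝕜} (hA : A.PosSemidef) :
    hA.sqrt.IsHermitian := by
  simp only [IsHermitian, PosSemidef.sqrt, conjTranspose_mul, star_eq_conjTranspose,
    conjTranspose_conjTranspose, diagonal_conjTranspose, mul_assoc]
  congr 3
  ext i
  simp

lemma PosSemidef.sqrt_mul_self {A : Matrix ι ι 𝕜} (hA : A.PosSemidef) : hA.sqrt * hA.sqrt = A := by
  conv_rhs => rw [hA.isHermitian.spectral_theorem, Unitary.conjStarAlgAut_apply]
  simp only [PosSemidef.sqrt, mul_assoc]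
  rw [← mul_assoc (star _), Unitary.coe_star_mul_self, one_mul, ← mul_assoc (diagonal _),
    diagonal_mul_diagonal]
  congr 3
  ext i
  simp only [Function.comp_apply]
  rw [← RCLike.ofReal_mul, Real.mul_self_sqrt (hA.eigenvalues_nonneg i)]

lemma PosDef.trace_mul_pos {ρ A : Matrix ι ι 𝕜} (hρ : ρ.PosDef) (hA : A.PosSemidef)
    (hA0 : A ≠ 0) : 0 < (ρ * A).trace := by
  set s := hρ.posSemidef.sqrt
  have hs : sᴴ = s := hρ.posSemidef.isHermitian_sqrt
  have hρs : s * s = ρ := hρ.posSemidef.sqrt_mul_self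
  have hsu : IsUnit s := by
    have := hρ.isUnit
    rw [← hρs, isUnit_iff_isUnit_det, det_mul] at this
    exact (isUnit_iff_isUnit_det s).mpr (isUnit_of_mul_isUnit_left this)
  have hconj : (s * A * s).PosSemidef := by
    simpa only [hs] using hA.mul_mul_conjTranspose_same s
  have htr : (ρ * A).trace = (s * A * s).trace := by
    rw [← hρs, mul_assoc, trace_mul_comm, mul_assoc]
  rw [htr]
  refine lt_of_le_of_ne hconj.trace_nonneg fun h => hA0 ?_
  have h0 : s * A * s = s * 0 * s := by rw [mul_zero, zero_mul, ← hconj.trace_eq_zero_iff, h]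
  exact hsu.mul_left_cancel (hsu.mul_right_cancel h0)

lemma PosDef.trace_mul_nonneg {ρ A : Matrix ι ι 𝕜} (hρ : ρ.PosDef) (hA : A.PosSemidef) :
    0 ≤ (ρ * A).trace := by
  rcases eq_or_ne A 0 with rfl | hA0
  · simp
  · exact (hρ.trace_mul_pos hA hA0).le

lemma PosDef.trace_mul_eq_zero_iff {ρ A : Matrix ι ι 𝕜} (hρ : ρ.PosDef) (hA : A.PosSemidef) :
    (ρ * A).trace = 0 ↔ A = 0 :=
  ⟨fun h => by_contra fun hA0 => (hρ.trace_mul_pos hA hA0).ne' h, fun h => by simp [h]⟩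

def variance (ρ A : Matrix ι ι 𝕜) : 𝕜 :=
  (ρ * ((A - (ρ * A).trace • 1) * (A - (ρ * A).trace • 1))).trace

lemma trace_mul_mul_self_eq_variance_add_sq {ρ : Matrix ι ι 𝕜} (hρ : ρ.trace = 1)
    (A : Matrix ι ι 𝕜) : (ρ * A * A).trace = variance ρ A + (ρ * A).trace ^ 2 := by
  simp only [variance, sub_mul, mul_sub, Matrix.smul_mul, Matrix.mul_smul, Matrix.mul_one,
    Matrix.one_mul, smul_smul, trace_sub, trace_smul, smul_eq_mul, hρ, ← mul_assoc]
  ring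

lemma IsHermitian.sub_trace_mul_smul_one {ρ A : Matrix ι ι 𝕜} (hρ : ρ.IsHermitian)
    (hA : A.IsHermitian) : (A - (ρ * A).trace • 1).IsHermitian :=
  hA.sub (isHermitian_one.smul (hρ.isSelfAdjoint_trace_mul hA))

lemma PosDef.variance_nonneg {ρ A : Matrix ι ι 𝕜} (hρ : ρ.PosDef) (hA : A.IsHermitian) :
    0 ≤ variance ρ A :=
  hρ.trace_mul_nonneg ((hρ.isHermitian.sub_trace_mul_smul_one hA).posSemidef_mul_self)

lemma PosDef.variance_eq_zero_iff {ρ A : Matrix ι ι 𝕜} (hρ : ρ.PosDef) (hA : A.IsHermitian) :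
    variance ρ A = 0 ↔ A = (ρ * A).trace • 1 := by
  have hM := hρ.isHermitian.sub_trace_mul_smul_one hA
  rw [variance, hρ.trace_mul_eq_zero_iff hM.posSemidef_mul_self, ← sub_eq_zero (a := A),
    ← conjTranspose_mul_self_eq_zero (A := A - _), hM.eq]

lemma exists_pos_smul_one_iff {ρ A : Matrix ι ι 𝕜} (hρ : ρ.trace = 1) (hA : 0 < (ρ * A).trace) :
    (∃ a : ℝ, 0 < a ∧ A = (a : 𝕜) • 1) ↔ A = (ρ * A).trace • 1 := by
  constructor
  · rintro ⟨a, -, rfl⟩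
    simp [hρ]
  · intro h
    obtain ⟨a, ha, hac⟩ := RCLike.pos_iff_exists_ofReal.mp hA
    exact ⟨a, ha, hac ▸ h⟩

end RCLike

end Matrix

lemma trace_outerProd {ι : Type*} [Fintype ι] (E F : Matrix ι ι ℂ) :
    (outerProd E F).trace = (E * Fᴴ).trace := by
  simp [trace, outerProd, mul_apply, Fintype.sum_prod_type]

lemma trace_fisherRho {ι κ : Type*} [Fintype ι] [DecidableEq ι] [Fintype κ]
    {ρ : Matrix ι ι ℂ} (hρ : ρ.PosDef) {A : κ → Matrix ι ι ℂ} (hA : ∀ x, (A x).IsHermitian) :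
    (FisherRho hρ A).trace = ∑ x, (ρ * A x * A x).trace / (ρ * A x).trace := by
  set s := hρ.posSemidef.sqrt
  have hs : sᴴ = s := hρ.posSemidef.isHermitian_sqrt
  have hρs : s * s = ρ := hρ.posSemidef.sqrt_mul_self
  refine (trace_sum _ _).trans (sum_congr rfl fun x _ => ?_)
  rw [trace_smul, smul_eq_mul, trace_outerProd, conjTranspose_mul, hs, (hA x).eq, inv_mul_eq_div,
    ← mul_assoc, trace_mul_cycle, ← mul_assoc, hρs]

/-- Lower bound 1 on the trace of the generalized Fisher information matrix,
with equality iff the measurement is trivial. -/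
theorem stmt5 {d n : ℕ} {ρ : Matrix (Fin d) (Fin d) ℂ} (hρ : ρ.PosDef)
    (hρtr : Matrix.trace ρ = 1)
    (A : Fin n → Matrix (Fin d) (Fin d) ℂ) (hA : IsMeasurement A) (hA0 : ∀ x, A x ≠ 0)
    (T : ℝ) (hT : (T : ℂ) = ∑ x, Matrix.trace (ρ * A x * A x) / Matrix.trace (ρ * A x)) :
    Matrix.trace (FisherRho hρ A) = (T : ℂ) ∧ 1 ≤ T ∧
      (T = 1 ↔ ∀ x, ∃ a : ℝ, 0 < a ∧ A x = (a : ℂ) • 1) := by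
  obtain ⟨hpsd, hsum⟩ := hA
  have hγ : ∀ x, 0 < (ρ * A x).trace := fun x => hρ.trace_mul_pos (hpsd x) (hA0 x)
  have hγsum : ∑ x, (ρ * A x).trace = 1 := by
    simp only [← trace_sum, ← mul_sum, hsum, Matrix.mul_one, hρtr]
  have hτ : ∀ x, 0 ≤ variance ρ (A x) / (ρ * A x).trace := fun x =>
    div_nonneg (hρ.variance_nonneg (hpsd x).isHermitian) (hγ x).le
  have hT' : (T : ℂ) = 1 + ∑ x, variance ρ (A x) / (ρ * A x).trace := by
    rw [hT, ← hγsum, ← sum_add_distrib]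
    refine sum_congr rfl fun x _ => ?_
    rw [trace_mul_mul_self_eq_variance_add_sq hρtr]
    field_simp [(hγ x).ne']
    ring
  refine ⟨by rw [trace_fisherRho hρ fun x => (hpsd x).isHermitian, hT], ?_, ?_⟩
  · have : (1 : ℂ) ≤ T := hT' ▸ le_add_of_nonneg_right (sum_nonneg fun x _ => hτ x)
    exact_mod_cast this
  · calc T = 1 ↔ ∑ x, variance ρ (A x) / (ρ * A x).trace = 0 := by
          rw [← Complex.ofReal_inj, hT', Complex.ofReal_one, add_eq_left]
      _ ↔ ∀ x, variance ρ (A x) = 0 := by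
          simp [sum_eq_zero_iff_of_nonneg fun x _ => hτ x, (hγ _).ne']
      _ ↔ ∀ x, A x = (ρ * A x).trace • 1 :=
          forall_congr' fun x => hρ.variance_eq_zero_iff (hpsd x).isHermitian
      _ ↔ _ := forall_congr' fun x => (exists_pos_smul_one_iff hρtr (hγ x)).symm
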